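/- For positive reals C₁, C₂ and t > log(C₁/C₂), if (C₂/C₁)(t + log(C₂/C₁)) - 4(C₂/C₁)^{1/2}((C₂/C₁)^{1/2} - e^{-t/2}) + (C₂/C₁ - e^{-t}) ≤ 1, then C₁/C₂ + log(C₁/C₂) ≥ t - 3. -/
import Mathlib


theorem key_implication (C₁ C₂ t : ℝ) (hC₁ : 0 < C₁) (hC₂ : 0 < C₂)
    (ht : Real.log (C₁ / C₂) < t)
    (h : (C₂ / C₁) * (t + Real.log (C₂ / C₁))
        - 4 * Real.sqrt (C₂ / C₁) * (Real.sqrt (C₂ / C₁) - Real.exp (-t / 2))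
        + (C₂ / C₁ - Real.exp (-t)) ≤ 1) :
    C₁ / C₂ + Real.log (C₁ / C₂) ≥ t - 3 := by
  have hr : 0 < C₂ / C₁ := div_pos hC₂ hC₁
  have hr' : 0 < C₁ / C₂ := div_pos hC₁ hC₂
  have hlog : Real.log (C₂ / C₁) = - Real.log (C₁ / C₂) := by
    rw [← Real.log_inv]; congr 1; field_simp
  have hexp : Real.exp (-t) < C₂ / C₁ := by
    have h1 : -t < Real.log (C₂ / C₁) := by rw [hlog]; linarith
    calc Real.exp (-t) < Real.exp (Real.log (C₂ / C₁)) := Real.exp_lt_exp.2 h1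
      _ = C₂ / C₁ := Real.exp_log hr
  have hsqe : Real.sqrt (Real.exp (-t)) = Real.exp (-t / 2) := by
    have : Real.exp (-t) = Real.exp (-t / 2) * Real.exp (-t / 2) := by
      rw [← Real.exp_add]; ring_nf
    rw [this, Real.sqrt_mul_self (Real.exp_pos _).le]
  have hE : Real.exp (-t / 2) ≤ Real.sqrt (C₂ / C₁) := by
    rw [← hsqe]; exact Real.sqrt_le_sqrt hexp.le
  have hEpos : 0 < Real.exp (-t / 2) := Real.exp_pos _
  have hE2 : Real.exp (-t / 2) * Real.exp (-t / 2) = Real.exp (-t) := by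
    rw [← Real.exp_add]; ring_nf
  have hs : Real.sqrt (C₂ / C₁) * Real.sqrt (C₂ / C₁) = C₂ / C₁ :=
    Real.mul_self_sqrt hr.le
  have hspos : 0 < Real.sqrt (C₂ / C₁) := Real.sqrt_pos.2 hr
  -- key: r * (t + log r) - 3 r ≤ 1
  have key : (C₂ / C₁) * (t - Real.log (C₁ / C₂)) - 3 * (C₂ / C₁) ≤ 1 := by
    rw [hlog] at h
    nlinarith [mul_pos hEpos (by linarith : (0:ℝ) < 4 * Real.sqrt (C₂ / C₁) - Real.exp (-t / 2))]
  have hmul : (C₂ / C₁) * (C₁ / C₂) = 1 := by field_simp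
  nlinarith [mul_le_mul_of_nonneg_left key hr'.le, hmul]
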